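/- arXiv:2206.03533 — 3 statements merged into one kernel-verified Lean document; each statement's English description precedes it below -/
import Mathlib

section
/- Every GV-torsion R-module is absolutely w-pure. -/
/-!
A finitely presented module `N` has a projective resolution `P` whose degree-one term `P₁` is
finitely generated free, and `Ext¹(N, A)` is a subquotient of `Hom(P₁, A)`. If `A` is GV-torsion,
so is `Hom(P₁, A)`: a homomorphism is killed by the product of GV-ideals annihilating the images
of finitely many generators, and a product of GV-ideals is a GV-ideal (via
`Hom(J₁ J₂, R) ↪ Hom(J₁ ⊗ J₂, R) ≅ Hom(J₂, Hom(J₁, R)) ≅ Hom(J₂, R) ≅ R`).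
-/

open CategoryTheory

universe u

noncomputable section

variable (R : Type u) [CommRing R]

/-- The Ext group `Ext^n_R(M, N)` as an `R`-module (via `ModuleCat`). -/
def extMod (M N : Type u) [AddCommGroup M] [Module R M]
    [AddCommGroup N] [Module R N] (n : ℕ) : ModuleCat R :=
  ((Ext R (ModuleCat R) n).obj (Opposite.op (ModuleCat.of R M))).obj (ModuleCat.of R N)

/-- `J` is a Glaz–Vasconcelos ideal: finitely generated and the natural map
`R → Hom_R(J, R)` is bijective. -/
def IsGVIdeal (J : Ideal R) : Prop :=
  J.FG ∧ Function.Bijective (fun r : R => (r • J.subtype : J →ₗ[R] R))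

/-- A module is GV-torsion if every element is annihilated by some GV-ideal. -/
def IsGVTorsion (M : Type u) [AddCommGroup M] [Module R M] : Prop :=
  ∀ x : M, ∃ J : Ideal R, IsGVIdeal R J ∧ ∀ j ∈ J, j • x = 0

/-- An ideal `I` is a `w`-ideal if it is `w`-closed: whenever `J x ⊆ I` for some
GV-ideal `J`, one has `x ∈ I`. -/
def IsWIdeal (I : Ideal R) : Prop :=
  ∀ (x : R) (J : Ideal R), IsGVIdeal R J → (∀ j ∈ J, j * x ∈ I) → x ∈ I

/-- `R` is a DW-ring if every maximal ideal is a `w`-ideal. -/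
def IsDWRing : Prop :=
  ∀ m : Ideal R, m.IsMaximal → IsWIdeal R m

/-- `A` is absolutely `w`-pure if `Ext^1_R(N, A)` is GV-torsion for every
finitely presented module `N`. -/
def IsAbsolutelyWPure (A : Type u) [AddCommGroup A] [Module R A] : Prop :=
  ∀ (N : Type u) [AddCommGroup N] [Module R N], Module.FinitePresentation R N →
    IsGVTorsion R (extMod R N A 1)

/-- `M` is `w`-FP-projective if `Ext^1_R(M, A) = 0` for every absolutely
`w`-pure module `A`. -/
def IsWFPProjective (M : Type u) [AddCommGroup M] [Module R M] : Prop :=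
  ∀ (A : Type u) [AddCommGroup A] [Module R A], IsAbsolutelyWPure R A →
    Subsingleton (extMod R M A 1)

end

open CategoryTheory Limits TensorProduct

namespace IsGVIdeal

variable {R : Type u} [CommRing R] {J J₁ J₂ : Ideal R}

lemma mk' (hfg : J.FG) (hinj : ∀ r : R, (∀ j ∈ J, r * j = 0) → r = 0)
    (hsurj : ∀ f : J →ₗ[R] R, ∃ r : R, f = r • J.subtype) : IsGVIdeal R J := by
  refine ⟨hfg, fun r s hrs => sub_eq_zero.1 (hinj _ fun j hj => ?_), fun f => (hsurj f).imp
    fun r hr => hr.symm⟩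
  simpa [sub_mul] using sub_eq_zero.2 (LinearMap.congr_fun hrs ⟨j, hj⟩)

lemma eq_zero_of_forall_mul_eq_zero (hJ : IsGVIdeal R J) {r : R} (h : ∀ j ∈ J, r * j = 0) :
    r = 0 :=
  hJ.2.1 (a₂ := 0) <| LinearMap.ext fun j => by simpa using h j j.2

noncomputable def equiv (hJ : IsGVIdeal R J) : R ≃ₗ[R] (J →ₗ[R] R) :=
  LinearEquiv.ofBijective (LinearMap.toSpanSingleton R _ J.subtype) hJ.2

lemma equiv_apply (hJ : IsGVIdeal R J) (r : R) (j : J) : hJ.equiv r j = r * j := rfl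

lemma top : IsGVIdeal R ⊤ := by
  refine mk' ⟨{1}, by simp⟩ (fun r h => by simpa using h 1 trivial) fun f => ⟨f ⟨1, trivial⟩, ?_⟩
  ext ⟨x, hx⟩
  have hx1 : (⟨x, hx⟩ : (⊤ : Ideal R)) = x • ⟨1, trivial⟩ := by ext; simp
  simp [hx1, mul_comm]

lemma mul (h₁ : IsGVIdeal R J₁) (h₂ : IsGVIdeal R J₂) : IsGVIdeal R (J₁ * J₂) := by
  refine mk' (h₁.1.mul h₂.1) (fun r hr => h₂.eq_zero_of_forall_mul_eq_zero fun a ha =>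
    h₁.eq_zero_of_forall_mul_eq_zero fun j hj => ?_) fun f => ?_
  · simpa [mul_assoc, mul_comm a] using hr _ (Ideal.mul_mem_mul hj ha)
  -- `a ↦ (j ↦ f (j * a))` lands in `Hom(J₁, R) ≃ R`, and the resulting map `J₂ → R` is some `r • ·`
  obtain ⟨r, hr⟩ :=
    h₂.2.2 (h₁.equiv.symm.toLinearMap ∘ₗ (curry (f ∘ₗ Submodule.mulMap' J₁ J₂)).flip)
  refine ⟨r, (LinearMap.cancel_right (Submodule.mulMap'_surjective J₁ J₂)).1 (ext' fun j a => ?_)⟩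
  have hja := LinearMap.congr_fun (congrArg h₁.equiv (LinearMap.congr_fun hr a)) j
  simp only [LinearMap.comp_apply, LinearEquiv.coe_coe, LinearEquiv.apply_symm_apply,
    LinearMap.flip_apply, curry_apply, equiv_apply] at hja
  simp [← hja, mul_comm, mul_left_comm]

lemma prod {ι : Type*} (s : Finset ι) {J : ι → Ideal R} (h : ∀ i ∈ s, IsGVIdeal R (J i)) :
    IsGVIdeal R (∏ i ∈ s, J i) := by
  classical
  induction s using Finset.induction with
  | empty => simpa using top
  | insert i s hi ih =>
    rw [Finset.prod_insert hi]
    exact (h i (Finset.mem_insert_self i s)).mul (ih fun j hj => h j (Finset.mem_insert_of_mem hj))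

end IsGVIdeal

namespace IsGVTorsion

variable {R : Type u} [CommRing R] {M P : Type u} [AddCommGroup M] [Module R M]
  [AddCommGroup P] [Module R P]

lemma of_surjective (f : M →ₗ[R] P) (hf : Function.Surjective f) (hM : IsGVTorsion R M) :
    IsGVTorsion R P := by
  intro y
  obtain ⟨x, rfl⟩ := hf y
  obtain ⟨J, hJ, hJx⟩ := hM x
  exact ⟨J, hJ, fun j hj => by rw [← map_smul, hJx j hj, map_zero]⟩

lemma of_linearEquiv (e : M ≃ₗ[R] P) (hM : IsGVTorsion R M) : IsGVTorsion R P :=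
  hM.of_surjective e e.surjective

lemma of_injective (f : M →ₗ[R] P) (hf : Function.Injective f) (hP : IsGVTorsion R P) :
    IsGVTorsion R M := by
  intro x
  obtain ⟨J, hJ, hJx⟩ := hP (f x)
  exact ⟨J, hJ, fun j hj => hf (by rw [map_smul, hJx j hj, map_zero])⟩

lemma linearMap [Module.Finite R M] (hP : IsGVTorsion R P) : IsGVTorsion R (M →ₗ[R] P) := by
  classical
  obtain ⟨s, hs⟩ := Module.Finite.fg_top (R := R) (M := M)
  intro f
  choose J hJ hJf using fun m : M => hP (f m)
  refine ⟨∏ m ∈ s, J m, IsGVIdeal.prod s fun m _ => hJ m, fun j hj => ?_⟩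
  refine LinearMap.ext_on hs fun m hm => ?_
  exact hJf m j (Ideal.prod_le_inf.trans (Finset.inf_le hm) hj)

end IsGVTorsion

lemma CategoryTheory.ShortComplex.isGVTorsion_homology {R : Type u} [CommRing R]
    (S : ShortComplex (ModuleCat.{u} R)) (h : IsGVTorsion R S.X₂) : IsGVTorsion R S.homology :=
  (h.of_injective S.iCycles.hom ((ModuleCat.mono_iff_injective _).1 inferInstance)).of_surjective
    S.homologyπ.hom ((ModuleCat.epi_iff_surjective _).1 inferInstance)

namespace CategoryTheory.ProjectiveResolution

variable {C : Type*} [Category* C] [Abelian C] [EnoughProjectives C] {Z P₀ P₁ : C}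
  (d : P₁ ⟶ P₀)

/-- The complex `⋯ ⟶ P₂ ⟶ P₁ ⟶ P₀`, continued to the left by syzygies. -/
noncomputable def complexOfPresentation : ChainComplex C ℕ :=
  ChainComplex.mk' P₀ P₁ d fun f =>
    ⟨_, Projective.d f, by erw [Category.assoc, kernel.condition, comp_zero]⟩

lemma complexOfPresentation_d_1_0 : (complexOfPresentation d).d 1 0 = d :=
  ChainComplex.mk'_d_1_0 _ _ _ _

noncomputable def complexOfPresentationXIso (n : ℕ) :
    (complexOfPresentation d).X (n + 2) ≅
      Projective.syzygies ((complexOfPresentation d).d (n + 1) n) :=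
  ChainComplex.mk'XIso _ _ _ _ n

lemma complexOfPresentation_d_succ_succ (n : ℕ) :
    (complexOfPresentation d).d (n + 2) (n + 1) =
      (complexOfPresentationXIso d n).hom ≫ Projective.d ((complexOfPresentation d).d (n + 1) n) :=
  ChainComplex.mk'_d _ _ _ _ n

lemma complexOfPresentation_exactAt_succ (n : ℕ) :
    (complexOfPresentation d).ExactAt (n + 1) := by
  rw [HomologicalComplex.exactAt_iff' _ (n + 2) (n + 1) n (by simp) (by simp)]
  refine (ShortComplex.exact_iff_of_iso ?_).1 (exact_d_f ((complexOfPresentation d).d (n + 1) n))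
  refine ShortComplex.isoMk (complexOfPresentationXIso d n).symm (Iso.refl _) (Iso.refl _) ?_ ?_
  · exact ((complexOfPresentation_d_succ_succ d n).symm ▸ Iso.inv_hom_id_assoc _ _).trans
      (Category.comp_id _).symm
  · exact (Category.id_comp _).trans (Category.comp_id _).symm

instance [Projective P₀] [Projective P₁] (n : ℕ) : Projective ((complexOfPresentation d).X n) := by
  obtain (_ | _ | _ | n) := n
  · assumption
  · assumption
  all_goals apply Projective.projective_over

variable {d} in
noncomputable def ofPresentation [Projective P₀] [Projective P₁] {π : P₀ ⟶ Z} (w : d ≫ π = 0)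
    (hexact : (ShortComplex.mk d π w).Exact) [Epi π] : ProjectiveResolution Z where
  complex := complexOfPresentation d
  π := (ChainComplex.toSingle₀Equiv _ _).symm ⟨π, by rw [complexOfPresentation_d_1_0]; exact w⟩
  quasiIso := ⟨fun n => by
    cases n
    · rw [ChainComplex.quasiIsoAt₀_iff, ShortComplex.quasiIso_iff_of_zeros']
      · refine (ShortComplex.exact_and_epi_g_iff_of_iso ?_).2 ⟨hexact, ‹Epi π›⟩
        exact ShortComplex.isoMk (Iso.refl _) (Iso.refl _) (Iso.refl _)
          (by erw [Category.id_comp, Category.comp_id]; exact (complexOfPresentation_d_1_0 d).symm)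
          (by
            erw [Category.id_comp, Category.comp_id]
            exact (ChainComplex.toSingle₀Equiv_symm_apply_f_zero
              (C := complexOfPresentation d) π _).symm)
      all_goals rfl
    · rw [quasiIsoAt_iff_exactAt']
      · apply complexOfPresentation_exactAt_succ
      · apply ChainComplex.exactAt_succ_single_obj⟩

end CategoryTheory.ProjectiveResolution

lemma Module.FinitePresentation.exists_projectiveResolution_finite_X_one {R : Type u}
    [CommRing R] (N : Type u) [AddCommGroup N] [Module R N] [Module.FinitePresentation R N] :
    ∃ P : ProjectiveResolution (ModuleCat.of R N), Module.Finite R (P.complex.X 1) := by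
  obtain ⟨a, b, π, d, hπ, hexact⟩ := Module.FinitePresentation.exists_fin' R N
  have : Epi (ModuleCat.ofHom π) := (ModuleCat.epi_iff_surjective _).2 hπ
  exact ⟨.ofPresentation (d := ModuleCat.ofHom d) (π := ModuleCat.ofHom π)
    (ModuleCat.hom_ext hexact.linearMap_comp_eq_zero)
    (ModuleCat.shortComplex_exact _ hexact), Module.Finite.pi⟩

lemma isGVTorsion_extMod_one_of_projectiveResolution {R : Type u} [CommRing R]
    {N A : Type u} [AddCommGroup N] [Module R N] [AddCommGroup A] [Module R A]
    (P : ProjectiveResolution (ModuleCat.of R N)) [Module.Finite R (P.complex.X 1)]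
    (hA : IsGVTorsion R A) : IsGVTorsion R (extMod R N A 1) := by
  let K := P.complex.linearYonedaObj R (ModuleCat.of R A)
  have hK : IsGVTorsion R (K.X 1) :=
    hA.linearMap.of_linearEquiv ModuleCat.homLinearEquiv.symm
  exact ((K.sc 1).isGVTorsion_homology hK).of_linearEquiv (P.isoExt 1 _).symm.toLinearEquiv

/-- Every GV-torsion module is absolutely `w`-pure. -/
theorem gvTorsion_isAbsolutelyWPure (R : Type u) [CommRing R]
    (A : Type u) [AddCommGroup A] [Module R A] (hA : IsGVTorsion R A) :
    IsAbsolutelyWPure R A := by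
  intro N _ _ _
  obtain ⟨P, _⟩ := Module.FinitePresentation.exists_projectiveResolution_finite_X_one (R := R) N
  exact isGVTorsion_extMod_one_of_projectiveResolution P hA
end

section
/- A commutative ring R is a DW-ring if and only if every finitely presented R-module is w-FP-projective. -/
open CategoryTheory

universe u

/-! In a DW-ring the only GV-ideal is `R` itself, so GV-torsion modules are zero and every
absolutely `w`-pure module is `Ext¹`-orthogonal to all finitely presented modules.

Conversely, let `J` be a GV-ideal. Since `J` kills `J/J²`, it kills every `Ext` group with
coefficients in `J/J²`, so `J/J²` is absolutely `w`-pure. As `R/J` is finitely presented,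
`Ext¹(R/J, J/J²) = 0`, so the projection `J → J/J²` extends to `R`; because `J` kills `J/J²`
this forces `J = J²`. Nakayama then gives `r ≡ 1 mod J` with `r J = 0`, and the GV condition
(injectivity of `R → Hom(J, R)`) forces `r = 0`, i.e. `J = R`. -/

section

open Limits

variable {R : Type u} [CommRing R]

theorem annihilator_le_annihilator_extMod (N A : Type u) [AddCommGroup N] [Module R N]
    [AddCommGroup A] [Module R A] (n : ℕ) :
    Module.annihilator R A ≤ Module.annihilator R (extMod R N A n) := by
  let P := projectiveResolution (ModuleCat.of R N)
  let K := P.complex.linearYonedaObj R (ModuleCat.of R A)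
  calc Module.annihilator R A ≤ Module.annihilator R (K.X n) := fun r hr =>
        Module.mem_annihilator.2 fun f =>
          show r • (show P.complex.X n ⟶ ModuleCat.of R A from f) = 0 by
            ext x
            exact Module.mem_annihilator.1 hr _
    _ ≤ Module.annihilator R (K.cycles n) :=
        (K.iCycles n).hom.annihilator_le_of_injective
          ((ModuleCat.mono_iff_injective _).1 inferInstance)
    _ ≤ Module.annihilator R (K.homology n) :=
        (K.homologyπ n).hom.annihilator_le_of_surjective
          ((ModuleCat.epi_iff_surjective _).1 inferInstance)
    _ = Module.annihilator R (extMod R N A n) :=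
        (P.isoExt n _).toLinearEquiv.annihilator_eq.symm

theorem CategoryTheory.ProjectiveResolution.exists_d_comp_eq_of_subsingleton_extMod
    {M A : Type u} [AddCommGroup M] [Module R M] [AddCommGroup A] [Module R A]
    [Subsingleton (extMod R M A 1)] (P : ProjectiveResolution (ModuleCat.of R M))
    (f : P.complex.X 1 ⟶ ModuleCat.of R A) (hf : P.complex.d 2 1 ≫ f = 0) :
    ∃ g : P.complex.X 0 ⟶ ModuleCat.of R A, P.complex.d 1 0 ≫ g = f := by
  have hH : IsZero ((P.complex.linearYonedaObj R (ModuleCat.of R A)).homology 1) :=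
    (ModuleCat.isZero_of_subsingleton (extMod R M A 1)).of_iso (P.isoExt 1 _).symm
  have hexact := (HomologicalComplex.exactAt_iff' _ 0 1 2 (by simp) (by simp)).1
    ((HomologicalComplex.exactAt_iff_isZero_homology _ 1).2 hH)
  rw [ShortComplex.moduleCat_exact_iff] at hexact
  exact hexact f hf

theorem LinearMap.exists_comp_subtype_eq_of_lift {P₁ P₀ M Q A : Type*}
    [AddCommGroup P₁] [Module R P₁] [AddCommGroup P₀] [Module R P₀] [AddCommGroup M] [Module R M]
    [AddCommGroup Q] [Module R Q] [AddCommGroup A] [Module R A]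
    {d : P₁ →ₗ[R] P₀} {π : P₀ →ₗ[R] M} (hdπ : Function.Exact d π) (hπ : Function.Surjective π)
    {K : Submodule R Q} {p : Q →ₗ[R] M} (hK : ker p = K)
    {α₀ : P₀ →ₗ[R] Q} (hα₀ : p ∘ₗ α₀ = π) {α₁ : P₁ →ₗ[R] K} (hα₁ : K.subtype ∘ₗ α₁ = α₀ ∘ₗ d)
    {φ : K →ₗ[R] A} {g : P₀ →ₗ[R] A} (hg : g ∘ₗ d = φ ∘ₗ α₁) :
    ∃ ψ : Q →ₗ[R] A, ψ ∘ₗ K.subtype = φ := by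
  -- `Q` is the pushout of `P₀ ← P₁ → K`, so `ψ` is induced by `g` and `φ` on `P₀ × K`.
  let σ := α₀.coprod K.subtype
  have hσ : Function.Surjective σ := by
    intro q
    obtain ⟨u, hu⟩ := hπ (p q)
    have hq : q - α₀ u ∈ K := by
      rw [← hK, mem_ker, map_sub, ← comp_apply, hα₀, hu, sub_self]
    exact ⟨(u, ⟨q - α₀ u, hq⟩), add_sub_cancel _ _⟩
  have hker : ker σ ≤ ker (g.coprod φ) := by
    rintro ⟨u, k⟩ hz
    replace hz : α₀ u + k = 0 := hz
    have hu : π u = 0 := by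
      have hk : p k = 0 := by rw [← mem_ker, hK]; exact k.2
      rw [← hα₀, comp_apply, eq_neg_of_add_eq_zero_left hz, map_neg, hk, neg_zero]
    obtain ⟨v, rfl⟩ := (hdπ u).1 hu
    have hv : α₁ v + k = 0 := Subtype.ext <| by
      rw [Submodule.coe_add, ← K.subtype_apply, ← comp_apply, hα₁]
      exact hz
    change g (d v) + φ k = 0
    rw [← comp_apply, hg, comp_apply, ← map_add, hv, map_zero]
  refine ⟨(ker σ).liftQ _ hker ∘ₗ (σ.quotKerEquivOfSurjective hσ).symm.toLinearMap, ?_⟩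
  ext k
  have : (σ.quotKerEquivOfSurjective hσ).symm k = Submodule.Quotient.mk (0, k) := by
    rw [LinearEquiv.symm_apply_eq, quotKerEquivOfSurjective_apply_mk]
    simp [σ]
  simp [this]

theorem exists_comp_subtype_eq_of_subsingleton_extMod {M Q A : Type u}
    [AddCommGroup M] [Module R M] [AddCommGroup Q] [Module R Q] [AddCommGroup A] [Module R A]
    [Subsingleton (extMod R M A 1)] {K : Submodule R Q} {p : Q →ₗ[R] M}
    (hp : Function.Surjective p) (hK : LinearMap.ker p = K) (φ : K →ₗ[R] A) :
    ∃ ψ : Q →ₗ[R] A, ψ ∘ₗ K.subtype = φ := by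
  let P := projectiveResolution (ModuleCat.of R M)
  let d := P.complex.d 1 0
  let π : P.complex.X 0 →ₗ[R] M := (P.π.f 0).hom
  have hπ : Function.Surjective π := (ModuleCat.epi_iff_surjective _).1 inferInstance
  have hdπ : Function.Exact d π :=
    (ShortComplex.ShortExact.moduleCat_exact_iff_function_exact _).1 P.exact₀
  obtain ⟨α₀, hα₀⟩ := Module.projective_lifting_property p π hp
  have hmem (v : P.complex.X 1) : α₀ (d v) ∈ K := by
    rw [← hK, LinearMap.mem_ker, ← LinearMap.comp_apply, hα₀]
    exact (hdπ _).2 ⟨v, rfl⟩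
  let α₁ := (α₀ ∘ₗ d.hom).codRestrict K hmem
  -- `φ ∘ α₁` is a 1-cocycle of `Hom(P, A)`, hence a coboundary `g ∘ d`.
  obtain ⟨g, hg⟩ := P.exists_d_comp_eq_of_subsingleton_extMod (ModuleCat.ofHom (φ ∘ₗ α₁)) <| by
    ext w
    have : α₁ (P.complex.d 2 1 w) = 0 := Subtype.ext <| by
      simp [α₁, d, ← ModuleCat.comp_apply]
    simp [this]
  exact LinearMap.exists_comp_subtype_eq_of_lift hdπ hπ hK hα₀ rfl
    (congrArg ModuleCat.Hom.hom hg)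

theorem Ideal.eq_zero_of_subsingleton_extMod {A : Type u} [AddCommGroup A] [Module R A]
    {I : Ideal R} (hI : I ≤ Module.annihilator R A) [Subsingleton (extMod R (R ⧸ I) A 1)]
    (φ : I →ₗ[R] A) : φ = 0 := by
  obtain ⟨ψ, rfl⟩ :=
    exists_comp_subtype_eq_of_subsingleton_extMod I.mkQ_surjective I.ker_mkQ φ
  ext ⟨j, hj⟩
  have hψ : ψ j = j • ψ 1 := by rw [← map_smul, smul_eq_mul, mul_one]
  rw [LinearMap.zero_apply, LinearMap.comp_apply, Submodule.subtype_apply, hψ]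
  exact Module.mem_annihilator.1 (hI hj) _

theorem Ideal.le_annihilator_quotient_smul_top (I : Ideal R) (M : Type*) [AddCommGroup M]
    [Module R M] : I ≤ Module.annihilator R (M ⧸ I • (⊤ : Submodule R M)) :=
  (Module.isTorsionBySet_iff_subset_annihilator _ _).1
    (Module.isTorsionBySet_quotient_ideal_smul M I)

theorem Ideal.le_mul_self_of_subsingleton_extMod (I : Ideal R)
    [Subsingleton (extMod R (R ⧸ I) (I ⧸ I • (⊤ : Submodule R I)) 1)] : I ≤ I * I := by
  intro j hj
  have hmk := LinearMap.congr_fun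
    (Ideal.eq_zero_of_subsingleton_extMod (I.le_annihilator_quotient_smul_top I)
      (I • (⊤ : Submodule R I)).mkQ)
    ⟨j, hj⟩
  rw [Submodule.mkQ_apply, LinearMap.zero_apply, Submodule.Quotient.mk_eq_zero] at hmk
  have := Submodule.mem_map_of_mem (f := I.subtype) hmk
  rwa [Submodule.map_smul'', Submodule.map_top, Submodule.range_subtype] at this

variable (R) in
theorem isDWRing_iff_forall_isGVIdeal_eq_top :
    IsDWRing R ↔ ∀ J : Ideal R, IsGVIdeal R J → J = ⊤ := by
  refine ⟨fun hR J hJ => ?_, fun hR m _ x J hJ hJx => by simpa using hJx 1 (by simp [hR J hJ])⟩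
  by_contra hne
  obtain ⟨m, hm, hJm⟩ := J.exists_le_maximal hne
  exact hm.ne_top <| (m.eq_top_iff_one).2 <| hR m hm 1 J hJ fun _ hj => by simpa using hJm hj

theorem IsGVTorsion.subsingleton {M : Type u} [AddCommGroup M] [Module R M]
    (hR : ∀ J : Ideal R, IsGVIdeal R J → J = ⊤) (hM : IsGVTorsion R M) : Subsingleton M :=
  subsingleton_of_forall_eq 0 fun x => by
    obtain ⟨J, hJ, hJx⟩ := hM x
    simpa using hJx 1 (by simp [hR J hJ])

namespace IsGVIdeal

variable {J : Ideal R}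

theorem isGVTorsion_of_le_annihilator (hJ : IsGVIdeal R J) {M : Type u} [AddCommGroup M]
    [Module R M] (hM : J ≤ Module.annihilator R M) : IsGVTorsion R M :=
  fun x => ⟨J, hJ, fun _ hj => Module.mem_annihilator.1 (hM hj) x⟩

theorem isAbsolutelyWPure_of_le_annihilator (hJ : IsGVIdeal R J) {A : Type u} [AddCommGroup A]
    [Module R A] (hA : J ≤ Module.annihilator R A) : IsAbsolutelyWPure R A :=
  fun N _ _ _ =>
    hJ.isGVTorsion_of_le_annihilator (hA.trans (annihilator_le_annihilator_extMod N A 1))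

theorem eq_top_of_le_mul (hJ : IsGVIdeal R J) (h : J ≤ J * J) : J = ⊤ := by
  obtain ⟨r, hr1, hrJ⟩ := Submodule.exists_sub_one_mem_and_smul_eq_zero_of_fg_of_le_smul J J hJ.1 h
  have hr : r = 0 := hJ.2.1 <| LinearMap.ext fun x => by
    simpa using hrJ x x.2
  rw [hr, zero_sub, neg_mem_iff] at hr1
  exact (J.eq_top_iff_one).2 hr1

end IsGVIdeal

end

/-- `R` is a DW-ring iff every finitely presented module is `w`-FP-projective. -/
theorem isDWRing_iff_finitePresentation_wFPProjective (R : Type u) [CommRing R] :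
    IsDWRing R ↔
      ∀ (M : Type u) [AddCommGroup M] [Module R M],
        Module.FinitePresentation R M → IsWFPProjective R M := by
  rw [isDWRing_iff_forall_isGVIdeal_eq_top]
  refine ⟨fun hR M _ _ hM A _ _ hA => (hA M hM).subsingleton hR, fun H J hJ => ?_⟩
  have hfp : Module.FinitePresentation R (R ⧸ J) :=
    Module.finitePresentation_of_surjective J.mkQ J.mkQ_surjective (by rw [J.ker_mkQ]; exact hJ.1)
  have : Subsingleton (extMod R (R ⧸ J) (J ⧸ J • (⊤ : Submodule R J)) 1) :=
    H (R ⧸ J) hfp _ (hJ.isAbsolutelyWPure_of_le_annihilator (J.le_annihilator_quotient_smul_top J))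
  exact hJ.eq_top_of_le_mul J.le_mul_self_of_subsingleton_extMod
end

section
/- If M is a w-FP-projective R-module and P is a finitely generated projective R-module, then Hom_R(P,M) is w-FP-projective. -/
open CategoryTheory

universe u

/-!
Write `P` as a direct summand of `R^k`. Precomposition makes `Hom_R(P, M)` a direct summand of
`Hom_R(R^k, M) ≅ M^k`, and `Ext^n_R(-, A)` is an additive functor, so it kills finite direct
sums and direct summands of modules it kills.
-/
open CategoryTheory Limits Opposite

instance CategoryTheory.projectiveResolutions_additive {C : Type*} [Category C] [Abelian C]
    [HasProjectiveResolutions C] : (projectiveResolutions C).Additive where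
  map_add {X Y f g} := by
    dsimp [projectiveResolutions]
    erw [← (HomotopyCategory.quotient C _).map_add]
    apply HomotopyCategory.eq_of_homotopy
    apply ProjectiveResolution.liftHomotopy (f + g)
    · apply ProjectiveResolution.lift_commutes
    · rw [Preadditive.add_comp, ProjectiveResolution.lift_commutes,
        ProjectiveResolution.lift_commutes, ← Preadditive.comp_add, ← Functor.map_add]

instance CategoryTheory.Functor.leftDerived_additive {C D : Type*} [Category C] [Category D]
    [Abelian C] [HasProjectiveResolutions C] [Abelian D] (F : C ⥤ D) [F.Additive] (n : ℕ) :
    (F.leftDerived n).Additive :=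
  inferInstanceAs (projectiveResolutions C ⋙ F.mapHomotopyCategory _ ⋙
    HomotopyCategory.homologyFunctor D _ n).Additive

instance Ext.flip_obj_additive {R : Type*} [Ring R] {C : Type*} [Category C]
    [Abelian C] [Linear R C] [EnoughProjectives C] (n : ℕ) (Y : C) :
    ((Ext R C n).flip.obj Y).Additive :=
  inferInstanceAs (((linearYoneda R C).obj Y).rightOp.leftDerived n).leftOp.Additive

theorem CategoryTheory.Retract.isZero {C : Type*} [Category C] [HasZeroMorphisms C] {X Y : C}
    (h : Retract X Y) (hY : IsZero Y) : IsZero X := by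
  rw [IsZero.iff_id_eq_zero, ← h.retract, hY.eq_of_tgt h.i 0, zero_comp]

theorem CategoryTheory.Functor.isZero_obj_op_biproduct {C D : Type*} [Category C] [Preadditive C]
    [Category D] [Preadditive D] (G : Cᵒᵖ ⥤ D) [G.Additive] {J : Type} [Fintype J]
    (f : J → C) [HasBiproduct f] (h : ∀ j, IsZero (G.obj (op (f j)))) :
    IsZero (G.obj (op (⨁ f))) := by
  rw [IsZero.iff_id_eq_zero, ← G.map_id, ← op_id, ← biproduct.total, op_sum, G.map_sum]
  refine Finset.sum_eq_zero fun j _ => ?_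
  rw [op_comp, G.map_comp, (h j).eq_of_tgt (G.map (biproduct.ι f j).op) 0, zero_comp]

section
variable {R : Type u} [CommRing R] {A : Type u} [AddCommGroup A] [Module R A] (n : ℕ)

theorem subsingleton_extMod_of_retract {X Y : Type u} [AddCommGroup X] [Module R X]
    [AddCommGroup Y] [Module R Y] (f : X →ₗ[R] Y) (g : Y →ₗ[R] X) (h : g ∘ₗ f = LinearMap.id)
    (hY : Subsingleton (extMod R Y A n)) : Subsingleton (extMod R X A n) := by
  rw [← ModuleCat.isZero_iff_subsingleton] at hY ⊢
  exact ((Retract.mk (ModuleCat.ofHom f) (ModuleCat.ofHom g)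
    (ModuleCat.hom_ext h)).op.map ((Ext R _ n).flip.obj (ModuleCat.of R A))).isZero hY

theorem subsingleton_extMod_pi {M : Type u} [AddCommGroup M] [Module R M] (ι : Type) [Fintype ι]
    (hM : Subsingleton (extMod R M A n)) : Subsingleton (extMod R (ι → M) A n) := by
  rw [← ModuleCat.isZero_iff_subsingleton] at hM ⊢
  let G := (Ext R (ModuleCat R) n).flip.obj (ModuleCat.of R A)
  exact (G.isZero_obj_op_biproduct (fun _ : ι => ModuleCat.of R M) fun _ => hM).of_iso
    (G.mapIso (ModuleCat.biproductIsoPi fun _ : ι => ModuleCat.of R M).op)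

theorem subsingleton_extMod_linearMap_of_projective {M P : Type u} [AddCommGroup M] [Module R M]
    [AddCommGroup P] [Module R P] [Module.Finite R P] [Module.Projective R P]
    (hM : Subsingleton (extMod R M A n)) : Subsingleton (extMod R (P →ₗ[R] M) A n) := by
  obtain ⟨k, π, s, -, -, hπs⟩ := Module.Finite.exists_comp_eq_id_of_projective R P
  let e := LinearEquiv.piRing R M (Fin k) R
  refine subsingleton_extMod_of_retract n (e.toLinearMap ∘ₗ LinearMap.lcomp R M π)
    (LinearMap.lcomp R M s ∘ₗ e.symm.toLinearMap) ?_ (subsingleton_extMod_pi n (Fin k) hM)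
  ext f p
  simpa using congrArg f (LinearMap.congr_fun hπs p)

end

/-- If `M` is `w`-FP-projective and `P` is finitely generated projective, then
`Hom_R(P, M)` is `w`-FP-projective. -/
theorem wFPProjective_hom (R : Type u) [CommRing R]
    (M : Type u) [AddCommGroup M] [Module R M] (hM : IsWFPProjective R M)
    (P : Type u) [AddCommGroup P] [Module R P] [Module.Finite R P]
    (hP : Module.Projective R P) :
    IsWFPProjective R (P →ₗ[R] M) := fun A _ _ hA =>
  subsingleton_extMod_linearMap_of_projective 1 (hM A hA)
end
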